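/- arXiv:0907.0534 — 6 statements merged into one kernel-verified Lean document; each statement's English description precedes it below -/
import Mathlib

section
/- Let H(x,y,t) = -(1/2) ln((x + a cos t)² + (y + a sin t)²) and let ℋ₁(x,y,t,e) = H(x,y,t) + e be its autonomous extension on the extended phase space with symplectic form dx∧dy + dt∧de. Then ℋ₂(x,y,t) = ((x + a cos t)² + (y + a sin t)²) e^{-x²-y²} is a first integral of ℋ₁: the Poisson bracket {ℋ₁, ℋ₂} vanishes wherever H is defined. -/
/-!
Write `V(x,y,t) = |z + a e^{it}|²` with `z = x + iy`. Both `V` and the Gaussian `e^{-|z|²}` are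
invariant under rotating `z` and shifting `t` by the same angle, so `∂V/∂t = y ∂V/∂x - x ∂V/∂y`
and `E = e^{-x²-y²}` has `y ∂E/∂x - x ∂E/∂y = 0`. In the bracket the `log` contributes `1/V`,
which cancels against the factor `V` of `ℋ₂`, and the bracket becomes
`E (y ∂V/∂x - x ∂V/∂y) - E ∂V/∂t = 0`.
-/

open Real

noncomputable section

def sqDist (a x y t : ℝ) : ℝ := (x + a * cos t) ^ 2 + (y + a * sin t) ^ 2

section Derivatives

variable (a x y t : ℝ)

lemma hasDerivAt_sqDist_fst :
    HasDerivAt (fun x => sqDist a x y t) (2 * (x + a * cos t)) x :=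
  ((((hasDerivAt_id' x).add_const (a * cos t)).fun_pow 2).add_const _).congr_deriv (by ring)

lemma hasDerivAt_sqDist_snd :
    HasDerivAt (fun y => sqDist a x y t) (2 * (y + a * sin t)) y :=
  ((((hasDerivAt_id' y).add_const (a * sin t)).fun_pow 2).const_add _).congr_deriv (by ring)

/-- The infinitesimal form of the rotation invariance of `sqDist`. -/
lemma hasDerivAt_sqDist_time :
    HasDerivAt (fun t => sqDist a x y t)
      (y * (2 * (x + a * cos t)) - x * (2 * (y + a * sin t))) t := by
  have hcos := (((hasDerivAt_cos t).const_mul a).const_add x).fun_pow 2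
  have hsin := (((hasDerivAt_sin t).const_mul a).const_add y).fun_pow 2
  exact (hcos.add hsin).congr_deriv (by ring)

lemma hasDerivAt_gaussian_fst :
    HasDerivAt (fun x => exp (-x ^ 2 - y ^ 2)) (-2 * x * exp (-x ^ 2 - y ^ 2)) x :=
  (((((hasDerivAt_id' x).fun_pow 2).fun_neg).sub_const (y ^ 2)).exp).congr_deriv (by ring)

lemma hasDerivAt_gaussian_snd :
    HasDerivAt (fun y => exp (-x ^ 2 - y ^ 2)) (-2 * y * exp (-x ^ 2 - y ^ 2)) y :=
  ((((hasDerivAt_id' y).fun_pow 2).const_sub (-x ^ 2)).exp).congr_deriv (by ring)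

end Derivatives

end

/-- Since `ℋ₂` does not depend on `e` and `∂ℋ₁/∂e = 1`, `{ℋ₁, ℋ₂}` is the expression below. -/
theorem stmt7 (a : ℝ)
    (V H H2 : ℝ → ℝ → ℝ → ℝ)
    (hV : ∀ x y t, V x y t = (x + a * Real.cos t)^2 + (y + a * Real.sin t)^2)
    (hH : ∀ x y t, H x y t = -(1/2) * Real.log (V x y t))
    (hH2 : ∀ x y t, H2 x y t = V x y t * Real.exp (-x^2 - y^2)) :
    ∀ x y t, 0 < V x y t →
      deriv (fun x' => H x' y t) x * deriv (fun y' => H2 x y' t) y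
        - deriv (fun y' => H x y' t) y * deriv (fun x' => H2 x' y t) x
        - deriv (fun t' => H2 x y t') t = 0 := by
  obtain rfl : V = sqDist a := funext fun x => funext fun y => funext (hV x y)
  intro x y t hpos
  simp only [hH, hH2]
  have hVx := hasDerivAt_sqDist_fst a x y t
  have hVy := hasDerivAt_sqDist_snd a x y t
  rw [((hVx.log hpos.ne').const_mul _).deriv, ((hVy.log hpos.ne').const_mul _).deriv,
    (hVx.fun_mul (hasDerivAt_gaussian_fst x y)).deriv,
    (hVy.fun_mul (hasDerivAt_gaussian_snd x y)).deriv,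
    ((hasDerivAt_sqDist_time a x y t).mul_const _).deriv]
  field_simp
  ring
end

section
/- ℋ₂(x,y,t) = ((x + a cos t)² + (y + a sin t)²) e^{-x²-y²} is constant along every solution of the system ẋ = (-y - a sin t)/Ṽ, ẏ = (x + a cos t)/Ṽ with Ṽ(x,y,t) = (x + a cos t)² + (y + a sin t)²: d/dt [ℋ₂(x(t),y(t),t)] = 0. -/
/-!
Write `u = x + a cos t`, `v = y + a sin t`, so that `Ṽ = u² + v²` and `ẋ = -v/Ṽ`, `ẏ = u/Ṽ`.
Along a solution the terms `± uv/Ṽ` cancel in `d/dt Ṽ = 2(u u̇ + v v̇)`, leaving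
`2a (y cos t - x sin t)`, while `d/dt (-x² - y²) = 2(x v - y u)/Ṽ`. Hence
`d/dt (Ṽ e^{-x²-y²}) = e^{-x²-y²} (2a (y cos t - x sin t) + 2(x v - y u)) = 0`.
-/

open Real

theorem hasDerivAt_mul_exp_of_add_mul_eq_zero {f g : ℝ → ℝ} {f' g' t : ℝ}
    (hf : HasDerivAt f f' t) (hg : HasDerivAt g g' t) (h : f' + f t * g' = 0) :
    HasDerivAt (fun s => f s * exp (g s)) 0 t := by
  refine (hf.mul hg.exp).congr_deriv ?_
  linear_combination Real.exp (g t) * h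

section Trajectory

variable (a : ℝ) {x y : ℝ → ℝ} {t W : ℝ}

theorem hasDerivAt_shifted_normSq
    (hx : HasDerivAt x ((-(y t) - a * sin t) / W) t)
    (hy : HasDerivAt y ((x t + a * cos t) / W) t) :
    HasDerivAt (fun s => (x s + a * cos s) ^ 2 + (y s + a * sin s) ^ 2)
      (2 * a * (y t * cos t - x t * sin t)) t := by
  have hu := hx.fun_add ((hasDerivAt_cos t).const_mul a)
  have hv := hy.fun_add ((hasDerivAt_sin t).const_mul a)
  refine ((hu.fun_pow 2).add (hv.fun_pow 2)).congr_deriv ?_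
  ring

theorem hasDerivAt_neg_sq_sub_sq
    (hx : HasDerivAt x ((-(y t) - a * sin t) / W) t)
    (hy : HasDerivAt y ((x t + a * cos t) / W) t) :
    HasDerivAt (fun s => -x s ^ 2 - y s ^ 2)
      (2 * (x t * (y t + a * sin t) - y t * (x t + a * cos t)) / W) t := by
  refine ((hx.fun_pow 2).neg.sub (hy.fun_pow 2)).congr_deriv ?_
  ring

end Trajectory

/-- `ℋ₂(x,y,t) = ((x + a cos t)² + (y + a sin t)²) e^{-x²-y²}` is constant along
every solution of `ẋ = (-y - a sin t)/Ṽ`, `ẏ = (x + a cos t)/Ṽ` with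
`Ṽ = (x + a cos t)² + (y + a sin t)²`, on an interval where `Ṽ > 0`:
`d/dt[ℋ₂(x(t),y(t),t)] = 0`. -/
theorem stmt8 (a t₀ t₁ : ℝ) (x y : ℝ → ℝ)
    (V : ℝ → ℝ → ℝ → ℝ)
    (hV : ∀ x' y' t, V x' y' t = (x' + a * Real.cos t)^2 + (y' + a * Real.sin t)^2)
    (hpos : ∀ t ∈ Set.Ioo t₀ t₁, 0 < V (x t) (y t) t)
    (hx : ∀ t ∈ Set.Ioo t₀ t₁,
      HasDerivAt x ((-(y t) - a * Real.sin t) / V (x t) (y t) t) t)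
    (hy : ∀ t ∈ Set.Ioo t₀ t₁,
      HasDerivAt y ((x t + a * Real.cos t) / V (x t) (y t) t) t) :
    ∀ t ∈ Set.Ioo t₀ t₁,
      HasDerivAt (fun s => V (x s) (y s) s * Real.exp (-(x s)^2 - (y s)^2)) 0 t := by
  intro t ht
  have hV_ne : V (x t) (y t) t ≠ 0 := (hpos t ht).ne'
  simp only [hV] at hx hy hV_ne ⊢
  refine hasDerivAt_mul_exp_of_add_mul_eq_zero
    (hasDerivAt_shifted_normSq a (hx t ht) (hy t ht))
    (hasDerivAt_neg_sq_sub_sq a (hx t ht) (hy t ht)) ?_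
  rw [mul_div_cancel₀ _ hV_ne]
  ring
end

section
/- For a > 0, the curves r_±(t) = (a_± cos t, a_± sin t) with a_± = (-a ± √(a²+4))/2 are 2π-periodic solutions of the system ẋ = (-y - a sin t)/Ṽ, ẏ = (x + a cos t)/Ṽ, where Ṽ = (x + a cos t)² + (y + a sin t)². -/
/-! Both `a_±` are roots of `c² + a c - 1`, i.e. `c (c + a) = 1`. Along the circle of radius `c`
the point `(x + a cos t, y + a sin t)` is `(c + a)(cos t, sin t)`, so `Ṽ = (c + a)²` and the
vector field reduces to `(-sin t, cos t) / (c + a) = c (-sin t, cos t)`, the velocity of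
`t ↦ c (cos t, sin t)`. -/

open Real

lemma mul_add_eq_one_of_mem_roots {a c : ℝ}
    (hc : c ∈ ({(-a + √(a ^ 2 + 4)) / 2, (-a - √(a ^ 2 + 4)) / 2} : Set ℝ)) :
    c * (c + a) = 1 := by
  have hsq : √(a ^ 2 + 4) ^ 2 = a ^ 2 + 4 := sq_sqrt (by positivity)
  rcases hc with rfl | rfl <;> linear_combination hsq / 4

lemma mul_div_sq_eq_mul_of_mul_add_eq_one {a c : ℝ} (h : c * (c + a) = 1) (x : ℝ) :
    (c + a) * x / (c + a) ^ 2 = c * x := by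
  have hca : c + a ≠ 0 := right_ne_zero_of_mul_eq_one h
  field_simp
  linear_combination -x * h

lemma mul_cos_add_sq_add_mul_sin_add_sq (a c t : ℝ) :
    (c * cos t + a * cos t) ^ 2 + (c * sin t + a * sin t) ^ 2 = (c + a) ^ 2 := by
  linear_combination (c + a) ^ 2 * sin_sq_add_cos_sq t

theorem stmt10_general (a : ℝ)
    (V : ℝ → ℝ → ℝ → ℝ)
    (hV : ∀ x y t, V x y t = (x + a * Real.cos t)^2 + (y + a * Real.sin t)^2) :
    ∀ c ∈ ({(-a + Real.sqrt (a^2 + 4)) / 2, (-a - Real.sqrt (a^2 + 4)) / 2} : Set ℝ),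
      ∀ t : ℝ,
        HasDerivAt (fun s => c * Real.cos s)
          ((-(c * Real.sin t) - a * Real.sin t) / V (c * Real.cos t) (c * Real.sin t) t) t ∧
        HasDerivAt (fun s => c * Real.sin s)
          ((c * Real.cos t + a * Real.cos t) / V (c * Real.cos t) (c * Real.sin t) t) t ∧
        c * Real.cos (t + 2 * π) = c * Real.cos t ∧
        c * Real.sin (t + 2 * π) = c * Real.sin t := by
  intro c hc t
  have hroot := mul_add_eq_one_of_mem_roots hc
  have hVc : V (c * cos t) (c * sin t) t = (c + a) ^ 2 := by
    rw [hV, mul_cos_add_sq_add_mul_sin_add_sq]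
  refine ⟨?_, ?_, by rw [cos_add_two_pi], by rw [sin_add_two_pi]⟩
  · refine ((hasDerivAt_cos t).const_mul c).congr_deriv ?_
    rw [hVc, show -(c * sin t) - a * sin t = (c + a) * -sin t by ring,
      mul_div_sq_eq_mul_of_mul_add_eq_one hroot]
  · refine ((hasDerivAt_sin t).const_mul c).congr_deriv ?_
    rw [hVc, ← add_mul, mul_div_sq_eq_mul_of_mul_add_eq_one hroot]

/-- For `a > 0`, the curves `r_±(t) = (a_± cos t, a_± sin t)` with
`a_± = (-a ± √(a²+4))/2` are `2π`-periodic solutions of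
`ẋ = (-y - a sin t)/Ṽ`, `ẏ = (x + a cos t)/Ṽ`,
`Ṽ = (x + a cos t)² + (y + a sin t)²`. -/
theorem stmt10 (a : ℝ) (ha : 0 < a)
    (V : ℝ → ℝ → ℝ → ℝ)
    (hV : ∀ x y t, V x y t = (x + a * Real.cos t)^2 + (y + a * Real.sin t)^2) :
    ∀ c ∈ ({(-a + Real.sqrt (a^2 + 4)) / 2, (-a - Real.sqrt (a^2 + 4)) / 2} : Set ℝ),
      ∀ t : ℝ,
        HasDerivAt (fun s => c * Real.cos s)
          ((-(c * Real.sin t) - a * Real.sin t) / V (c * Real.cos t) (c * Real.sin t) t) t ∧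
        HasDerivAt (fun s => c * Real.sin s)
          ((c * Real.cos t + a * Real.cos t) / V (c * Real.cos t) (c * Real.sin t) t) t ∧
        c * Real.cos (t + 2 * π) = c * Real.cos t ∧
        c * Real.sin (t + 2 * π) = c * Real.sin t :=
  stmt10_general a V hV
end

section
/- For the linear variational system (ẇ₁, ẇ₂)ᵀ = c² [[sin 2t, -cos 2t], [-cos 2t, -sin 2t]] (w₁, w₂)ᵀ with constant c² > 1, the pair w₁(t) = e^{λt}((1-c²)cos t - λ sin t), w₂(t) = e^{λt}((1-c²) sin t + λ cos t), where λ = √(c⁴-1), is a solution. -/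
/-!
Differentiating `e^{λt}(a cos t + b sin t)` only changes the coefficients `(a, b)` linearly.
On the right-hand side, the angle-difference formulas reduce `sin 2t cos t - cos 2t sin t` and
`cos 2t cos t + sin 2t sin t` to `sin t` and `cos t`, so both sides are again of the form
`e^{λt}(a cos t + b sin t)`; their coefficients agree exactly when `λ² = c⁴ - 1`.
-/

open Real

theorem hasDerivAt_exp_mul_cos_add_sin (lam a b t : ℝ) :
    HasDerivAt (fun s => exp (lam * s) * (a * cos s + b * sin s))
      (exp (lam * t) * ((lam * a + b) * cos t + (lam * b - a) * sin t)) t := by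
  have hexp : HasDerivAt (fun s => exp (lam * s)) (exp (lam * t) * lam) t :=
    ((hasDerivAt_id' t).const_mul lam).exp.congr_deriv (by rw [mul_one])
  have htrig : HasDerivAt (fun s => a * cos s + b * sin s) (a * -sin t + b * cos t) t :=
    ((hasDerivAt_cos t).const_mul a).add ((hasDerivAt_sin t).const_mul b)
  exact (hexp.mul htrig).congr_deriv (by ring)

/-- For the variational system `(ẇ₁,ẇ₂)ᵀ = c²[[sin 2t, -cos 2t],[-cos 2t, -sin 2t]](w₁,w₂)ᵀ`
with `c² > 1`, the pair `w₁(t) = e^{λt}((1-c²)cos t - λ sin t)`,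
`w₂(t) = e^{λt}((1-c²)sin t + λ cos t)`, `λ = √(c⁴-1)`, is a solution. -/
theorem stmt13 (c lam : ℝ) (hc : 1 < c^2) (hlam : lam = Real.sqrt (c^4 - 1))
    (w₁ w₂ : ℝ → ℝ)
    (hw₁ : ∀ t, w₁ t = Real.exp (lam * t) * ((1 - c^2) * Real.cos t - lam * Real.sin t))
    (hw₂ : ∀ t, w₂ t = Real.exp (lam * t) * ((1 - c^2) * Real.sin t + lam * Real.cos t)) :
    ∀ t, HasDerivAt w₁ (c^2 * (Real.sin (2*t) * w₁ t - Real.cos (2*t) * w₂ t)) t ∧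
         HasDerivAt w₂ (c^2 * (-Real.cos (2*t) * w₁ t - Real.sin (2*t) * w₂ t)) t := by
  have hsq : lam ^ 2 = c ^ 4 - 1 := by
    rw [hlam, sq_sqrt]
    nlinarith
  have hw₁' : w₁ = fun s => exp (lam * s) * ((1 - c^2) * cos s + -lam * sin s) :=
    funext fun s => by rw [hw₁]; ring
  have hw₂' : w₂ = fun s => exp (lam * s) * (lam * cos s + (1 - c^2) * sin s) :=
    funext fun s => by rw [hw₂]; ring
  intro t
  have hsin : sin (2 * t) * cos t - cos (2 * t) * sin t = sin t := by
    rw [← sin_sub]; ring_nf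
  have hcos : cos (2 * t) * cos t + sin (2 * t) * sin t = cos t := by
    rw [← cos_sub]; ring_nf
  have d₁ := hasDerivAt_exp_mul_cos_add_sin lam (1 - c^2) (-lam) t
  have d₂ := hasDerivAt_exp_mul_cos_add_sin lam lam (1 - c^2) t
  rw [← hw₁'] at d₁
  rw [← hw₂'] at d₂
  rw [hw₁ t, hw₂ t]
  constructor
  · refine d₁.congr_deriv ?_
    linear_combination -exp (lam * t) * sin t * hsq - c^2 * exp (lam * t) * (1 - c^2) * hsin
      + c^2 * exp (lam * t) * lam * hcos
  · refine d₂.congr_deriv ?_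
    linear_combination exp (lam * t) * cos t * hsq + c^2 * exp (lam * t) * (1 - c^2) * hcos
      + c^2 * exp (lam * t) * lam * hsin
end

section
/- For the linear variational system (ẇ₁, ẇ₂)ᵀ = c² [[sin 2t, -cos 2t], [-cos 2t, -sin 2t]] (w₁, w₂)ᵀ with 0 < c² < 1, writing z = w₁ + i w₂, the system is equivalent to the complex ODE ż = -i e^{2it} c² z̄, and all its solutions are bounded; the characteristic (Floquet) exponents are ±i√(1-c⁴). -/
/-! In the frame rotating with angle `t`, i.e. for `x + i y = e^{-it} (w₁ + i w₂)`, the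
system becomes the autonomous oscillator `ẋ = (1 - c²) y`, `ẏ = -(1 + c²) x` of frequency
`ω = √(1 - c⁴)`. Its solutions are explicit combinations of `cos ωt` and `sin ωt`, hence bounded,
and since the rotation is trivial at `t = 2π`, the monodromy matrix is
`[[cos 2πω, (1 - c²)/ω · sin 2πω], [-(1 + c²)/ω · sin 2πω, cos 2πω]]`, with eigenvalues
`e^{±2πiω}`. -/

open Real

def IsVariationalSolution (c : ℝ) (w₁ w₂ : ℝ → ℝ) : Prop :=
  ∀ t, HasDerivAt w₁ (c^2 * (sin (2*t) * w₁ t - cos (2*t) * w₂ t)) t ∧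
    HasDerivAt w₂ (c^2 * (-cos (2*t) * w₁ t - sin (2*t) * w₂ t)) t

theorem hasDerivAt_ofReal_add_I_mul_iff {u v : ℝ → ℝ} {u' v' t : ℝ} :
    HasDerivAt (fun s => (u s : ℂ) + Complex.I * v s) (u' + Complex.I * v') t ↔
      HasDerivAt u u' t ∧ HasDerivAt v v' t := by
  refine ⟨fun h => ⟨?_, ?_⟩, fun ⟨hu, hv⟩ => hu.ofReal_comp.add (hv.ofReal_comp.const_mul _)⟩
  · simpa [Function.comp_def] using Complex.reCLM.hasFDerivAt.comp_hasDerivAt t h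
  · simpa [Function.comp_def] using Complex.imCLM.hasFDerivAt.comp_hasDerivAt t h

theorem neg_I_mul_exp_mul_conj_eq (c w₁ w₂ t : ℝ) :
    -Complex.I * Complex.exp (2 * Complex.I * t) * (c^2 : ℂ) *
        (starRingEnd ℂ) ((w₁ : ℂ) + Complex.I * (w₂ : ℂ))
      = ((c^2 * (sin (2*t) * w₁ - cos (2*t) * w₂) : ℝ) : ℂ)
        + Complex.I * ((c^2 * (-cos (2*t) * w₁ - sin (2*t) * w₂) : ℝ) : ℂ) := by
  rw [show 2 * Complex.I * t = ((2 * t : ℝ) : ℂ) * Complex.I by push_cast; ring,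
    Complex.exp_mul_I]
  simp only [map_add, map_mul, Complex.conj_I, Complex.conj_ofReal]
  push_cast
  linear_combination (c^2 * Complex.sin (2*t) * w₂ * Complex.I - c^2 * Complex.sin (2*t) * w₁
    + c^2 * Complex.cos (2*t) * w₂) * Complex.I_sq

theorem isVariationalSolution_iff_complex (c : ℝ) (w₁ w₂ : ℝ → ℝ) :
    IsVariationalSolution c w₁ w₂ ↔
      ∀ t : ℝ, HasDerivAt (fun s : ℝ => (w₁ s : ℂ) + Complex.I * (w₂ s : ℂ))
        (-Complex.I * Complex.exp (2 * Complex.I * t) * (c^2 : ℂ) *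
          (starRingEnd ℂ) ((w₁ t : ℂ) + Complex.I * (w₂ t : ℂ))) t := by
  simp only [IsVariationalSolution, neg_I_mul_exp_mul_conj_eq, hasDerivAt_ofReal_add_I_mul_iff]

theorem hasDerivAt_cos_mul (ω s : ℝ) :
    HasDerivAt (fun u => cos (ω * u)) (-(ω * sin (ω * s))) s := by
  simpa [mul_comm] using ((hasDerivAt_id s).const_mul ω).cos

theorem hasDerivAt_sin_mul (ω s : ℝ) :
    HasDerivAt (fun u => sin (ω * u)) (ω * cos (ω * s)) s := by
  simpa [mul_comm] using ((hasDerivAt_id s).const_mul ω).sin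

theorem eq_apply_zero_of_hasDerivAt_zero {f : ℝ → ℝ} (hf : ∀ s, HasDerivAt f 0 s) (t : ℝ) :
    f t = f 0 :=
  is_const_of_deriv_eq_zero (fun s => (hf s).differentiableAt) (fun s => (hf s).deriv) t 0

theorem harmonic_oscillator_eq {x y : ℝ → ℝ} {p q ω : ℝ} (hω : ω ≠ 0) (hpq : p * q = ω ^ 2)
    (hx : ∀ t, HasDerivAt x (p * y t) t) (hy : ∀ t, HasDerivAt y (-(q * x t)) t) (t : ℝ) :
    x t = cos (ω * t) * x 0 + sin (ω * t) * (p / ω * y 0) ∧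
    y t = cos (ω * t) * y 0 + sin (ω * t) * (-(q / ω * x 0)) := by
  have hp : ω * (p / ω) = p := mul_div_cancel₀ p hω
  have hq : ω * (q / ω) = q := mul_div_cancel₀ q hω
  have hpω : p / ω * q = ω := by field_simp; linear_combination hpq
  have hqω : q / ω * p = ω := by field_simp; linear_combination hpq
  have hpq' : p / ω * (q / ω) = 1 := by field_simp; exact hpq
  have hP : ∀ s, HasDerivAt (fun u => cos (ω * u) * x u - sin (ω * u) * (p / ω * y u)) 0 s := by
    intro s
    refine (((hasDerivAt_cos_mul ω s).mul (hx s)).sub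
      ((hasDerivAt_sin_mul ω s).mul ((hy s).const_mul (p / ω)))).congr_deriv ?_
    linear_combination (sin (ω * s) * x s) * hpω - cos (ω * s) * y s * hp
  have hQ : ∀ s, HasDerivAt (fun u => sin (ω * u) * (q / ω * x u) + cos (ω * u) * y u) 0 s := by
    intro s
    refine (((hasDerivAt_sin_mul ω s).mul ((hx s).const_mul (q / ω))).add
      ((hasDerivAt_cos_mul ω s).mul (hy s))).congr_deriv ?_
    linear_combination cos (ω * s) * x s * hq + sin (ω * s) * y s * hqω
  have hP0 := eq_apply_zero_of_hasDerivAt_zero hP t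
  have hQ0 := eq_apply_zero_of_hasDerivAt_zero hQ t
  simp only [mul_zero, cos_zero, sin_zero, one_mul, zero_mul, sub_zero, zero_add] at hP0 hQ0
  have pyth := sin_sq_add_cos_sq (ω * t)
  constructor
  · linear_combination cos (ω * t) * hP0 + p / ω * sin (ω * t) * hQ0
      - x t * sin (ω * t) ^ 2 * hpq' - x t * pyth
  · linear_combination -(q / ω * sin (ω * t)) * hP0 + cos (ω * t) * hQ0
      - y t * sin (ω * t) ^ 2 * hpq' - y t * pyth

theorem abs_cos_mul_add_sin_mul_le (θ u v : ℝ) : |cos θ * u + sin θ * v| ≤ |u| + |v| :=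
  calc |cos θ * u + sin θ * v| ≤ |cos θ| * |u| + |sin θ| * |v| := by
        simpa only [abs_mul] using abs_add_le (cos θ * u) (sin θ * v)
    _ ≤ 1 * |u| + 1 * |v| := by gcongr; exacts [abs_cos_le_one θ, abs_sin_le_one θ]
    _ = |u| + |v| := by ring

namespace IsVariationalSolution

variable {c : ℝ} {w₁ w₂ : ℝ → ℝ}

theorem hasDerivAt_rotatingFrame (hw : IsVariationalSolution c w₁ w₂) :
    (∀ t, HasDerivAt (fun s => cos s * w₁ s + sin s * w₂ s)
      ((1 - c^2) * (-sin t * w₁ t + cos t * w₂ t)) t) ∧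
    (∀ t, HasDerivAt (fun s => -sin s * w₁ s + cos s * w₂ s)
      (-((1 + c^2) * (cos t * w₁ t + sin t * w₂ t))) t) := by
  have hsin (t : ℝ) : sin t = sin (2*t) * cos t - cos (2*t) * sin t := by
    rw [← sin_sub]; ring_nf
  have hcos (t : ℝ) : cos t = cos (2*t) * cos t + sin (2*t) * sin t := by
    rw [← cos_sub]; ring_nf
  refine ⟨fun t => ?_, fun t => ?_⟩
  · refine (((hasDerivAt_cos t).mul (hw t).1).add
      ((hasDerivAt_sin t).mul (hw t).2)).congr_deriv ?_
    linear_combination c^2 * w₂ t * hcos t - c^2 * w₁ t * hsin t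
  · refine (((hasDerivAt_sin t).neg.mul (hw t).1).add
      ((hasDerivAt_cos t).mul (hw t).2)).congr_deriv ?_
    rw [Pi.neg_apply]
    linear_combination c^2 * w₁ t * hcos t + c^2 * w₂ t * hsin t

theorem rotatingFrame_eq (hw : IsVariationalSolution c w₁ w₂) (hc : c^2 < 1) (t : ℝ) :
    cos t * w₁ t + sin t * w₂ t = cos (√(1 - c^4) * t) * w₁ 0
        + sin (√(1 - c^4) * t) * ((1 - c^2) / √(1 - c^4) * w₂ 0) ∧
    -sin t * w₁ t + cos t * w₂ t = cos (√(1 - c^4) * t) * w₂ 0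
        + sin (√(1 - c^4) * t) * (-((1 + c^2) / √(1 - c^4) * w₁ 0)) := by
  have hc4 : 0 < 1 - c^4 := by nlinarith [sq_nonneg c]
  have hω : (√(1 - c^4)) ^ 2 = (1 - c^2) * (1 + c^2) := by rw [sq_sqrt hc4.le]; ring
  simpa using harmonic_oscillator_eq (sqrt_pos.2 hc4).ne' hω.symm
    hw.hasDerivAt_rotatingFrame.1 hw.hasDerivAt_rotatingFrame.2 t

theorem exists_bound (hw : IsVariationalSolution c w₁ w₂) (hc : c^2 < 1) :
    ∃ M, ∀ t, |w₁ t| ≤ M ∧ |w₂ t| ≤ M := by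
  set A := |w₁ 0| + |(1 - c^2) / √(1 - c^4) * w₂ 0|
  set B := |w₂ 0| + |-((1 + c^2) / √(1 - c^4) * w₁ 0)|
  refine ⟨A + B, fun t => ?_⟩
  obtain ⟨hX, hY⟩ := hw.rotatingFrame_eq hc t
  set X := cos t * w₁ t + sin t * w₂ t
  set Y := -sin t * w₁ t + cos t * w₂ t
  have hXA : |X| ≤ A := by rw [hX]; exact abs_cos_mul_add_sin_mul_le _ _ _
  have hYB : |Y| ≤ B := by rw [hY]; exact abs_cos_mul_add_sin_mul_le _ _ _
  have pyth := sin_sq_add_cos_sq t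
  have h₁ : w₁ t = cos t * X + sin t * -Y := by linear_combination -w₁ t * pyth
  have h₂ : w₂ t = cos t * Y + sin t * X := by linear_combination -w₂ t * pyth
  constructor
  · calc |w₁ t| ≤ |X| + |-Y| := by rw [h₁]; exact abs_cos_mul_add_sin_mul_le _ _ _
      _ ≤ A + B := by rw [abs_neg]; linarith
  · calc |w₂ t| ≤ |Y| + |X| := by rw [h₂]; exact abs_cos_mul_add_sin_mul_le _ _ _
      _ ≤ A + B := by linarith

theorem apply_two_pi (hw : IsVariationalSolution c w₁ w₂) (hc : c^2 < 1) :
    w₁ (2 * π) = cos (√(1 - c^4) * (2 * π)) * w₁ 0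
        + (1 - c^2) / √(1 - c^4) * sin (√(1 - c^4) * (2 * π)) * w₂ 0 ∧
    w₂ (2 * π) = -((1 + c^2) / √(1 - c^4) * sin (√(1 - c^4) * (2 * π))) * w₁ 0
        + cos (√(1 - c^4) * (2 * π)) * w₂ 0 := by
  obtain ⟨h₁, h₂⟩ := hw.rotatingFrame_eq hc (2 * π)
  simp only [cos_two_pi, sin_two_pi, one_mul, zero_mul, add_zero, neg_zero, zero_add] at h₁ h₂
  exact ⟨by linear_combination h₁, by linear_combination h₂⟩

end IsVariationalSolution

theorem isVariationalSolution_column {c : ℝ} {W : ℝ → Matrix (Fin 2) (Fin 2) ℝ}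
    (hW : ∀ t i j, HasDerivAt (fun s => W s i j)
      ((Matrix.of ![![c^2 * sin (2*t), -(c^2 * cos (2*t))],
                    ![-(c^2 * cos (2*t)), -(c^2 * sin (2*t))]] * W t) i j) t) (j : Fin 2) :
    IsVariationalSolution c (fun s => W s 0 j) (fun s => W s 1 j) := by
  refine fun t => ⟨(hW t 0 j).congr_deriv ?_, (hW t 1 j).congr_deriv ?_⟩ <;>
  · simp only [Matrix.mul_apply, Fin.sum_univ_two, Matrix.of_apply, Matrix.cons_val_zero,
      Matrix.cons_val_one]
    ring

theorem monodromy_eq {c : ℝ} (hc : c^2 < 1) {W : ℝ → Matrix (Fin 2) (Fin 2) ℝ} (hW0 : W 0 = 1)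
    (hW : ∀ t i j, HasDerivAt (fun s => W s i j)
      ((Matrix.of ![![c^2 * sin (2*t), -(c^2 * cos (2*t))],
                    ![-(c^2 * cos (2*t)), -(c^2 * sin (2*t))]] * W t) i j) t) :
    W (2 * π) = !![cos (√(1 - c^4) * (2 * π)), (1 - c^2) / √(1 - c^4) * sin (√(1 - c^4) * (2 * π));
      -((1 + c^2) / √(1 - c^4) * sin (√(1 - c^4) * (2 * π))), cos (√(1 - c^4) * (2 * π))] := by
  obtain ⟨h00, h10⟩ := (isVariationalSolution_column hW 0).apply_two_pi hc
  obtain ⟨h01, h11⟩ := (isVariationalSolution_column hW 1).apply_two_pi hc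
  simp only [hW0, Matrix.one_apply_eq, Matrix.one_apply_ne zero_ne_one,
    Matrix.one_apply_ne one_ne_zero, mul_one, mul_zero, add_zero, zero_add] at h00 h10 h01 h11
  ext i j
  fin_cases i <;> fin_cases j <;> simp [h00, h01, h10, h11]

theorem map_ofReal_mulVec_eq_exp_smul (θ a b : ℝ) (hab : a * b = 1) :
    (!![cos θ, b * sin θ; -(a * sin θ), cos θ].map Complex.ofReal).mulVec ![(b : ℂ), Complex.I]
      = Complex.exp (θ * Complex.I) • ![(b : ℂ), Complex.I] := by
  have habC : (a : ℂ) * b = 1 := by exact_mod_cast hab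
  rw [Complex.exp_mul_I]
  ext i
  fin_cases i <;>
    simp only [Matrix.mulVec, dotProduct, Fin.sum_univ_two, Fin.isValue, Fin.zero_eta, Fin.mk_one,
      Matrix.map_apply, Matrix.of_apply, Matrix.cons_val', Matrix.cons_val_fin_one,
      Matrix.cons_val_zero, Matrix.cons_val_one, Complex.ofReal_neg, Complex.ofReal_mul,
      Complex.ofReal_sin, Complex.ofReal_cos, Pi.smul_apply, smul_eq_mul]
  · ring
  · linear_combination (-Complex.sin θ) * habC - Complex.sin θ * Complex.I_sq

theorem stmt14_general (c : ℝ) (hc1 : c^2 < 1) :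
    -- equivalence with the complex ODE ż = -i e^{2it} c² z̄
    (∀ w₁ w₂ : ℝ → ℝ,
      (∀ t, HasDerivAt w₁ (c^2 * (Real.sin (2*t) * w₁ t - Real.cos (2*t) * w₂ t)) t ∧
            HasDerivAt w₂ (c^2 * (-Real.cos (2*t) * w₁ t - Real.sin (2*t) * w₂ t)) t)
      ↔
      (∀ t : ℝ, HasDerivAt (fun s : ℝ => (w₁ s : ℂ) + Complex.I * (w₂ s : ℂ))
          (-Complex.I * Complex.exp (2 * Complex.I * t) * (c^2 : ℂ) *
            (starRingEnd ℂ) ((w₁ t : ℂ) + Complex.I * (w₂ t : ℂ))) t)) ∧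
    -- all solutions are bounded
    (∀ w₁ w₂ : ℝ → ℝ,
      (∀ t, HasDerivAt w₁ (c^2 * (Real.sin (2*t) * w₁ t - Real.cos (2*t) * w₂ t)) t ∧
            HasDerivAt w₂ (c^2 * (-Real.cos (2*t) * w₁ t - Real.sin (2*t) * w₂ t)) t) →
      ∃ M : ℝ, ∀ t, |w₁ t| ≤ M ∧ |w₂ t| ≤ M) ∧
    -- Floquet exponents ±i√(1-c⁴)
    (∀ W : ℝ → Matrix (Fin 2) (Fin 2) ℝ,
      W 0 = 1 →
      (∀ t i j, HasDerivAt (fun s => W s i j)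
        ((Matrix.of ![![c^2 * Real.sin (2*t), -(c^2 * Real.cos (2*t))],
                      ![-(c^2 * Real.cos (2*t)), -(c^2 * Real.sin (2*t))]] * W t) i j) t) →
      (∃ v : Fin 2 → ℂ, v ≠ 0 ∧
        ((W (2*π)).map (Complex.ofReal)).mulVec v
          = Complex.exp (2 * π * Complex.I * Real.sqrt (1 - c^4)) • v) ∧
      (∃ v : Fin 2 → ℂ, v ≠ 0 ∧
        ((W (2*π)).map (Complex.ofReal)).mulVec v
          = Complex.exp (-(2 * π * Complex.I * Real.sqrt (1 - c^4))) • v)) := by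
  refine ⟨isVariationalSolution_iff_complex c, fun _ _ hw => IsVariationalSolution.exists_bound hw hc1,
    fun W hW0 hW => ?_⟩
  have hc4 : 0 < 1 - c^4 := by nlinarith [sq_nonneg c]
  rw [monodromy_eq hc1 hW0 hW]
  set ω := √(1 - c^4)
  set θ := ω * (2 * π)
  have hab : (1 + c^2) / ω * ((1 - c^2) / ω) = 1 := by
    rw [div_mul_div_comm, ← sq, sq_sqrt hc4.le, div_eq_one_iff_eq hc4.ne']
    ring
  have hv (b : ℂ) : ![b, Complex.I] ≠ 0 := fun h => Complex.I_ne_zero (congrFun h 1)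
  -- `(θ, a, b) ↦ (-θ, -a, -b)` fixes the monodromy matrix and turns `e^{iθ}` into `e^{-iθ}`.
  have hθ : !![cos θ, (1 - c^2) / ω * sin θ; -((1 + c^2) / ω * sin θ), cos θ]
      = !![cos (-θ), -((1 - c^2) / ω) * sin (-θ); -(-((1 + c^2) / ω) * sin (-θ)), cos (-θ)] := by
    simp only [cos_neg, sin_neg, neg_mul_neg]
  refine ⟨⟨_, hv (((1 - c^2) / ω : ℝ) : ℂ), ?_⟩, ⟨_, hv ((-((1 - c^2) / ω) : ℝ) : ℂ), ?_⟩⟩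
  · convert map_ofReal_mulVec_eq_exp_smul θ _ _ hab using 3
    push_cast [θ]; ring
  · rw [hθ]
    convert map_ofReal_mulVec_eq_exp_smul (-θ) _ _ ((neg_mul_neg _ _).trans hab) using 3
    push_cast [θ]; ring

/-- For the variational system `(ẇ₁,ẇ₂)ᵀ = c²[[sin 2t, -cos 2t],[-cos 2t, -sin 2t]](w₁,w₂)ᵀ`
with `0 < c² < 1`: writing `z = w₁ + i w₂` the system is equivalent to the complex ODE
`ż = -i e^{2it} c² z̄`; all its solutions are bounded; and the characteristic (Floquet)
exponents are `±i√(1-c⁴)`, i.e. the monodromy matrix (fundamental solution at `2π`,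
normalized to the identity at `0`) has eigenvalues `e^{±2πi√(1-c⁴)}`. -/
theorem stmt14 (c : ℝ) (hc0 : 0 < c^2) (hc1 : c^2 < 1) :
    -- equivalence with the complex ODE ż = -i e^{2it} c² z̄
    (∀ w₁ w₂ : ℝ → ℝ,
      (∀ t, HasDerivAt w₁ (c^2 * (Real.sin (2*t) * w₁ t - Real.cos (2*t) * w₂ t)) t ∧
            HasDerivAt w₂ (c^2 * (-Real.cos (2*t) * w₁ t - Real.sin (2*t) * w₂ t)) t)
      ↔
      (∀ t : ℝ, HasDerivAt (fun s : ℝ => (w₁ s : ℂ) + Complex.I * (w₂ s : ℂ))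
          (-Complex.I * Complex.exp (2 * Complex.I * t) * (c^2 : ℂ) *
            (starRingEnd ℂ) ((w₁ t : ℂ) + Complex.I * (w₂ t : ℂ))) t)) ∧
    -- all solutions are bounded
    (∀ w₁ w₂ : ℝ → ℝ,
      (∀ t, HasDerivAt w₁ (c^2 * (Real.sin (2*t) * w₁ t - Real.cos (2*t) * w₂ t)) t ∧
            HasDerivAt w₂ (c^2 * (-Real.cos (2*t) * w₁ t - Real.sin (2*t) * w₂ t)) t) →
      ∃ M : ℝ, ∀ t, |w₁ t| ≤ M ∧ |w₂ t| ≤ M) ∧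
    -- Floquet exponents ±i√(1-c⁴)
    (∀ W : ℝ → Matrix (Fin 2) (Fin 2) ℝ,
      W 0 = 1 →
      (∀ t i j, HasDerivAt (fun s => W s i j)
        ((Matrix.of ![![c^2 * Real.sin (2*t), -(c^2 * Real.cos (2*t))],
                      ![-(c^2 * Real.cos (2*t)), -(c^2 * Real.sin (2*t))]] * W t) i j) t) →
      (∃ v : Fin 2 → ℂ, v ≠ 0 ∧
        ((W (2*π)).map (Complex.ofReal)).mulVec v
          = Complex.exp (2 * π * Complex.I * Real.sqrt (1 - c^4)) • v) ∧
      (∃ v : Fin 2 → ℂ, v ≠ 0 ∧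
        ((W (2*π)).map (Complex.ofReal)).mulVec v
          = Complex.exp (-(2 * π * Complex.I * Real.sqrt (1 - c^4))) • v)) :=
  stmt14_general c hc1
end

section
/- The hyperbolic periodic orbit r_-(t) = (a_- cos t, a_- sin t) of the system ẋ = (-y - a sin t)/Ṽ, ẏ = (x + a cos t)/Ṽ has characteristic exponents ±√(a_-⁴ - 1): the monodromy matrix of the variational equation along r_- has eigenvalues e^{±2π√(a_-⁴-1)}. -/
/-!
Write `b = a_-²`. In the frame rotating with the orbit, `w = R(t) z` with `R(t)` the rotation by
`t`, the variational equation becomes the autonomous system `ż = [[0, 1 - b], [-1 - b, 0]] z`,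
whose eigenvalues are `m = ±√(b² - 1)`, with eigenvectors `(1 - b, m)`. So
`t ↦ e^{mt} R(t) (1 - b, m)` solves the variational equation; as `R(2π) = 1`, uniqueness of
solutions of linear equations makes `(1 - b, m)` an eigenvector of the monodromy matrix with
eigenvalue `e^{2πm}`.
-/

open Real Matrix

section LinearODE

variable {n : Type*} [Fintype n]

theorem Matrix.lipschitzWith_mulVec_of_abs_le {A : Matrix n n ℝ} {c : ℝ}
    (hA : ∀ i j, |A i j| ≤ c) :
    LipschitzWith (Fintype.card n * c.toNNReal) (A *ᵥ ·) := by
  let _ := Matrix.linftyOpNormedAddCommGroup (m := n) (n := n) (α := ℝ)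
  have hnorm : ‖A‖₊ ≤ Fintype.card n * c.toNNReal := by
    rw [linfty_opNNNorm_def, ← nsmul_eq_mul]
    refine Finset.sup_le fun i _ => Finset.sum_le_card_nsmul _ _ _ fun j _ => ?_
    exact NNReal.le_toNNReal_of_coe_le (hA i j)
  refine LipschitzWith.of_dist_le_mul fun x y => ?_
  rw [dist_eq_norm, dist_eq_norm, ← mulVec_sub]
  calc ‖A *ᵥ (x - y)‖ ≤ ‖A‖ * ‖x - y‖ := linfty_opNorm_mulVec A (x - y)
    _ ≤ _ := by gcongr; exact_mod_cast hnorm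

theorem hasDerivAt_mulVec_of_hasDerivAt_apply {A W : ℝ → Matrix n n ℝ} {t : ℝ}
    (hW : ∀ i j, HasDerivAt (fun s => W s i j) ((A t * W t) i j) t) (v : n → ℝ) :
    HasDerivAt (fun s => W s *ᵥ v) (A t *ᵥ (W t *ᵥ v)) t := by
  rw [mulVec_mulVec, hasDerivAt_pi]
  intro i
  simp only [mulVec, dotProduct]
  exact HasDerivAt.fun_sum fun j _ => (hW i j).mul_const (v j)

theorem mulVec_eq_of_hasDerivAt [DecidableEq n] {A W : ℝ → Matrix n n ℝ} {c : ℝ}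
    (hA : ∀ t i j, |A t i j| ≤ c) (hW0 : W 0 = 1)
    (hW : ∀ t i j, HasDerivAt (fun s => W s i j) ((A t * W t) i j) t)
    {g : ℝ → n → ℝ} (hg : ∀ t, HasDerivAt g (A t *ᵥ g t) t) (T : ℝ) :
    W T *ᵥ g 0 = g T := by
  have := ODE_solution_unique_univ (v := fun t x => A t *ᵥ x) (s := fun _ => Set.univ) (t₀ := 0)
    (fun t => (lipschitzWith_mulVec_of_abs_le (hA t)).lipschitzOnWith)
    (fun t => ⟨hasDerivAt_mulVec_of_hasDerivAt_apply (hW t) (g 0), trivial⟩)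
    (fun t => ⟨hg t, trivial⟩) (by simp [hW0])
  exact congrFun this T

end LinearODE

noncomputable def variationalMatrix (b t : ℝ) : Matrix (Fin 2) (Fin 2) ℝ :=
  !![b * sin (2 * t), -(b * cos (2 * t)); -(b * cos (2 * t)), -(b * sin (2 * t))]

theorem abs_variationalMatrix_apply_le (b t : ℝ) (i j : Fin 2) :
    |variationalMatrix b t i j| ≤ |b| := by
  fin_cases i <;> fin_cases j <;>
    simp [variationalMatrix, abs_mul, mul_le_of_le_one_right, abs_sin_le_one, abs_cos_le_one]

/-- `e^{mt} R(t) (1 - b, m)`. -/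
noncomputable def rotatingSolution (b m t : ℝ) : Fin 2 → ℝ :=
  exp (m * t) • ![(1 - b) * cos t - m * sin t, (1 - b) * sin t + m * cos t]

theorem hasDerivAt_rotatingSolution {b m : ℝ} (hm : m ^ 2 = b ^ 2 - 1) (t : ℝ) :
    HasDerivAt (rotatingSolution b m)
      (variationalMatrix b t *ᵥ rotatingSolution b m t) t := by
  have hexp : HasDerivAt (fun s => exp (m * s)) (exp (m * t) * m) t := by
    simpa using ((hasDerivAt_id t).const_mul m).exp
  have hrot : HasDerivAt (fun s => ![(1 - b) * cos s - m * sin s, (1 - b) * sin s + m * cos s])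
      ![-((1 - b) * sin t) - m * cos t, (1 - b) * cos t - m * sin t] t := by
    rw [hasDerivAt_pi, Fin.forall_fin_two]
    constructor
    · simpa using ((hasDerivAt_cos t).const_mul (1 - b)).fun_sub ((hasDerivAt_sin t).const_mul m)
    · simpa [sub_eq_add_neg] using
        ((hasDerivAt_sin t).const_mul (1 - b)).fun_add ((hasDerivAt_cos t).const_mul m)
  refine (hexp.smul hrot).congr_deriv ?_
  ext i
  fin_cases i <;>
    simp only [rotatingSolution, variationalMatrix, mulVec, dotProduct, Fin.sum_univ_two,
      of_apply, cons_val', cons_val_zero, cons_val_one, cons_val_fin_one, Pi.add_apply,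
      Pi.smul_apply, smul_cons, smul_eq_mul, smul_empty, sin_two_mul, cos_two_mul', neg_mul,
      Fin.zero_eta, Fin.mk_one, Fin.isValue]
  · linear_combination -exp (m * t) * (b * (1 - b) * sin t - b * m * cos t) * sin_sq_add_cos_sq t
      - exp (m * t) * sin t * hm
  · linear_combination exp (m * t) * (b * (1 - b) * cos t + b * m * sin t) * sin_sq_add_cos_sq t
      + exp (m * t) * cos t * hm

theorem exists_mulVec_monodromy_eq_exp_smul {b m : ℝ} (hb : b ≠ 1) (hm : m ^ 2 = b ^ 2 - 1)
    {W : ℝ → Matrix (Fin 2) (Fin 2) ℝ} (hW0 : W 0 = 1)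
    (hW : ∀ t i j, HasDerivAt (fun s => W s i j) ((variationalMatrix b t * W t) i j) t) :
    ∃ v : Fin 2 → ℝ, v ≠ 0 ∧ W (2 * π) *ᵥ v = exp (2 * π * m) • v := by
  refine ⟨![1 - b, m], fun h => hb ?_, ?_⟩
  · have := congrFun h 0
    simp only [cons_val_zero, Pi.zero_apply] at this
    linarith
  have hperiod := mulVec_eq_of_hasDerivAt (abs_variationalMatrix_apply_le b) hW0 hW
    (hasDerivAt_rotatingSolution hm) (2 * π)
  convert hperiod using 1
  · simp [rotatingSolution]
  · simp [rotatingSolution, mul_comm m]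

/-- The hyperbolic periodic orbit `r_-(t) = (a_- cos t, a_- sin t)` (with
`a_- = (-a - √(a²+4))/2`, `a > 0`) has characteristic exponents `±√(a_-⁴ - 1)`:
the monodromy matrix of the variational equation
`(ẇ₁,ẇ₂)ᵀ = a_-²[[sin 2t, -cos 2t],[-cos 2t, -sin 2t]](w₁,w₂)ᵀ` along `r_-`
(the fundamental solution at `t = 2π`, normalized to the identity at `0`) has
eigenvalues `e^{±2π√(a_-⁴-1)}`. -/
theorem stmt15 (a : ℝ) (ha : 0 < a)
    (am : ℝ) (ham : am = (-a - Real.sqrt (a^2 + 4)) / 2)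
    (W : ℝ → Matrix (Fin 2) (Fin 2) ℝ)
    (hW0 : W 0 = 1)
    (hW : ∀ t i j, HasDerivAt (fun s => W s i j)
      ((Matrix.of ![![am^2 * Real.sin (2*t), -(am^2 * Real.cos (2*t))],
                    ![-(am^2 * Real.cos (2*t)), -(am^2 * Real.sin (2*t))]] * W t) i j) t) :
    (∃ v : Fin 2 → ℝ, v ≠ 0 ∧
      (W (2*π)).mulVec v = Real.exp (2 * π * Real.sqrt (am^4 - 1)) • v) ∧
    (∃ v : Fin 2 → ℝ, v ≠ 0 ∧
      (W (2*π)).mulVec v = Real.exp (-(2 * π * Real.sqrt (am^4 - 1))) • v) := by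
  have hsqrt : 2 < √(a ^ 2 + 4) := lt_sqrt_of_sq_lt (by nlinarith)
  have ham_lt : am < -1 := by rw [ham]; linarith
  have ham1 : 1 < am ^ 2 := by nlinarith
  have hμ : √(am ^ 4 - 1) ^ 2 = (am ^ 2) ^ 2 - 1 := by
    rw [sq_sqrt (by nlinarith)]
    ring
  refine ⟨exists_mulVec_monodromy_eq_exp_smul ham1.ne' hμ hW0 hW, ?_⟩
  rw [← mul_neg]
  exact exists_mulVec_monodromy_eq_exp_smul ham1.ne' (by rwa [neg_sq]) hW0 hW
end
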